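/- arXiv:math/0211278 — 6 statements merged into one kernel-verified Lean document; each statement's English description precedes it below -/
import Mathlib

section
/- Let S be a subdivision of a convex lattice polygon Δ ⊂ ℝ² into convex lattice polygons Δ_1, …, Δ_N induced by a convex piecewise-linear function. Then the rank of S (the dimension of the space of combinatorially isotopic amoebas) satisfies rk(S) ≥ |V(S)| − 1 − Σ_{i=1}^N (|V(Δ_i)| − 3), where V(S) is the set of vertices of S and V(Δ_i) the set of vertices of Δ_i. -/
/-!
A function supported on the vertex set `V` is the same as its `|V|` vertex values. Since a
non-collinear polygon `Δᵢ` has at least three affinely independent vertices, the affine functions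
restricted to its vertices form a 3-dimensional subspace of `ℝ^{V(Δᵢ)}`; being affine on those
vertices is therefore the vanishing of a class in a quotient of dimension `|V(Δᵢ)| - 3`, i.e.
`|V(Δᵢ)| - 3` linear conditions. Rank–nullity then bounds the dimension of the solution space
from below by `|V| - Σᵢ (|V(Δᵢ)| - 3)`.
-/

/-- Embedding of the integer lattice into the real plane. -/
def toR (p : ℤ × ℤ) : ℝ × ℝ := ((p.1 : ℝ), (p.2 : ℝ))

/-- Restriction to a finite point set `S` of the affine function
`(x,y) ↦ p₀ x + p₁ y + p₂`, as a linear map in the parameters `p`. -/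
noncomputable def affRestrict (S : Finset (ℝ × ℝ)) : (Fin 3 → ℝ) →ₗ[ℝ] (S → ℝ) where
  toFun p := fun v => p 0 * (v : ℝ × ℝ).1 + p 1 * (v : ℝ × ℝ).2 + p 2
  map_add' p q := by funext v; simp only [Pi.add_apply]; ring
  map_smul' c p := by funext v; simp only [Pi.smul_apply, smul_eq_mul, RingHom.id_apply]; ring

/-- The subspace of functions `(ℝ×ℝ) → ℝ` whose restriction to `S` agrees with some
affine function. -/
noncomputable def affCompatible (S : Finset (ℝ × ℝ)) : Submodule ℝ ((ℝ × ℝ) → ℝ) :=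
  Submodule.comap (LinearMap.funLeft ℝ ℝ (Subtype.val : S → ℝ × ℝ))
    (LinearMap.range (affRestrict S))

/-- The subspace of functions `(ℝ×ℝ) → ℝ` vanishing outside the finite set `V`. -/
noncomputable def supportedOn (V : Finset (ℝ × ℝ)) : Submodule ℝ ((ℝ × ℝ) → ℝ) :=
  ⨅ (v : ℝ × ℝ) (_ : v ∉ V),
    LinearMap.ker (LinearMap.proj (R := ℝ) (φ := fun _ : ℝ × ℝ => ℝ) v)

/-- The space of vertex-value assignments compatible with a subdivision into the polygons
with vertex sets `P i`: functions supported on the vertex set `V` which are affine on the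
vertices of each polygon.  The rank of the subdivision is `finrank` of this space minus
one (the defining convex piecewise-linear function matters up to an additive constant). -/
noncomputable def subdivisionSpace {N : ℕ} (V : Finset (ℝ × ℝ))
    (P : Fin N → Finset (ℝ × ℝ)) : Submodule ℝ ((ℝ × ℝ) → ℝ) :=
  supportedOn V ⊓ ⨅ i, affCompatible (P i)

open Module

theorem collinear_of_forall_apply_eq {k V : Type*} [Field k] [AddCommGroup V] [Module k V]
    [FiniteDimensional k V] (hV : finrank k V = 2) {f : Dual k V} (hf : f ≠ 0) {s : Set V}
    {c : k} (h : ∀ p ∈ s, f p = c) : Collinear k s := by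
  have hspan : vectorSpan k s ≤ LinearMap.ker f := by
    rw [vectorSpan_def, Submodule.span_le]
    rintro _ ⟨p, hp, q, hq, rfl⟩
    simp [h p hp, h q hq]
  have hker : finrank k (LinearMap.ker f) = 1 := by
    have := Dual.finrank_ker_add_one_of_ne_zero hf
    omega
  exact collinear_iff_finrank_le_one.mpr (hker ▸ Submodule.finrank_mono hspan)

theorem affRestrict_injective {S : Finset (ℝ × ℝ)} (hS : ¬ Collinear ℝ (S : Set (ℝ × ℝ))) :
    Function.Injective (affRestrict S) := by
  rw [← LinearMap.ker_eq_bot, Submodule.eq_bot_iff]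
  intro p hp
  have hzero : ∀ v ∈ S, p 0 * v.1 + p 1 * v.2 + p 2 = 0 := fun v hv => congrFun hp ⟨v, hv⟩
  let f : Dual ℝ (ℝ × ℝ) := p 0 • LinearMap.fst ℝ ℝ ℝ + p 1 • LinearMap.snd ℝ ℝ ℝ
  by_cases hf : f = 0
  · have h0 : p 0 = 0 := by simpa [f] using LinearMap.congr_fun hf (1, 0)
    have h1 : p 1 = 0 := by simpa [f] using LinearMap.congr_fun hf (0, 1)
    obtain ⟨v, hv⟩ : S.Nonempty := by
      by_contra hempty
      simp [Finset.not_nonempty_iff_eq_empty.mp hempty, collinear_empty] at hS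
    have h2 : p 2 = 0 := by simpa [h0, h1] using hzero v hv
    ext i; fin_cases i <;> simp [h0, h1, h2]
  · refine absurd (collinear_of_forall_apply_eq (c := -p 2) (by simp) hf ?_) hS
    intro v hv
    have := hzero v hv
    simp only [f, LinearMap.add_apply, LinearMap.smul_apply, LinearMap.fst_apply,
      LinearMap.snd_apply, smul_eq_mul]
    linarith

theorem Submodule.finrank_le_finrank_inf_iInf_ker_add_sum {K M ι : Type*} [Field K]
    [AddCommGroup M] [Module K M] [Fintype ι] {Q : ι → Type*} [∀ i, AddCommGroup (Q i)]
    [∀ i, Module K (Q i)] [∀ i, FiniteDimensional K (Q i)] (W : Submodule K M)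
    [FiniteDimensional K W] (L : ∀ i, M →ₗ[K] Q i) :
    finrank K W ≤ finrank K ↥(W ⊓ ⨅ i, LinearMap.ker (L i)) + ∑ i, finrank K (Q i) := by
  let f := (LinearMap.pi L).domRestrict W
  have hker : LinearMap.ker f = (W ⊓ ⨅ i, LinearMap.ker (L i)).comap W.subtype := by
    rw [LinearMap.ker_domRestrict, LinearMap.ker_pi, Submodule.comap_inf,
      Submodule.comap_subtype_self, top_inf_eq]
  have hrange : finrank K (LinearMap.range f) ≤ ∑ i, finrank K (Q i) :=
    (Submodule.finrank_le _).trans_eq (finrank_pi_fintype K)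
  calc finrank K W = finrank K (LinearMap.range f) + finrank K (LinearMap.ker f) :=
        (LinearMap.finrank_range_add_finrank_ker f).symm
    _ ≤ finrank K ↥(W ⊓ ⨅ i, LinearMap.ker (L i)) + ∑ i, finrank K (Q i) := by
        rw [hker, (Submodule.comapSubtypeEquivOfLe inf_le_left).finrank_eq]
        omega

theorem mem_supportedOn {V : Finset (ℝ × ℝ)} {f : ℝ × ℝ → ℝ} :
    f ∈ supportedOn V ↔ ∀ v ∉ V, f v = 0 := by
  simp [supportedOn, Submodule.mem_iInf]

noncomputable def supportedOnEquiv (V : Finset (ℝ × ℝ)) : supportedOn V ≃ₗ[ℝ] (V → ℝ) where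
  toFun f v := f.1 v
  map_add' _ _ := rfl
  map_smul' _ _ := rfl
  invFun g := ⟨fun v => if h : v ∈ V then g ⟨v, h⟩ else 0,
    mem_supportedOn.mpr fun v hv => dif_neg hv⟩
  left_inv f := Subtype.ext <| funext fun v => by
    by_cases hv : v ∈ V
    · simp [hv]
    · simp [hv, mem_supportedOn.mp f.2 v hv]
  right_inv g := funext fun v => by simp

instance (V : Finset (ℝ × ℝ)) : FiniteDimensional ℝ (supportedOn V) :=
  (supportedOnEquiv V).symm.finiteDimensional

theorem finrank_supportedOn (V : Finset (ℝ × ℝ)) : finrank ℝ (supportedOn V) = V.card := by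
  simp [(supportedOnEquiv V).finrank_eq]

noncomputable def affDefect (S : Finset (ℝ × ℝ)) :
    (ℝ × ℝ → ℝ) →ₗ[ℝ] (S → ℝ) ⧸ LinearMap.range (affRestrict S) :=
  (LinearMap.range (affRestrict S)).mkQ ∘ₗ LinearMap.funLeft ℝ ℝ Subtype.val

theorem ker_affDefect (S : Finset (ℝ × ℝ)) : LinearMap.ker (affDefect S) = affCompatible S := by
  rw [affDefect, LinearMap.ker_comp, Submodule.ker_mkQ]
  rfl

theorem finrank_quotient_range_affRestrict_add_three {S : Finset (ℝ × ℝ)}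
    (hS : ¬ Collinear ℝ (S : Set (ℝ × ℝ))) :
    finrank ℝ ((S → ℝ) ⧸ LinearMap.range (affRestrict S)) + 3 = S.card := by
  have := (LinearMap.range (affRestrict S)).finrank_quotient_add_finrank
  rwa [LinearMap.finrank_range_of_inj (affRestrict_injective hS), finrank_fin_fun,
    finrank_fintype_fun_eq_card, Fintype.card_coe] at this

theorem rank_lower_bound_for_subdivision_general
    (N : ℕ) (P : Fin N → Finset (ℝ × ℝ)) (V : Finset (ℝ × ℝ))
    (hnondeg : ∀ i, ¬ Collinear ℝ ((P i : Set (ℝ × ℝ)))) :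
    (V.card : ℤ) - 1 - ∑ i, ((P i).card - 3 : ℤ)
      ≤ (Module.finrank ℝ (subdivisionSpace V P) : ℤ) - 1 := by
  have hdim := (supportedOn V).finrank_le_finrank_inf_iInf_ker_add_sum (fun i => affDefect (P i))
  rw [finrank_supportedOn, iInf_congr fun i => ker_affDefect (P i)] at hdim
  have hcodim : ∑ i, ((P i).card - 3 : ℤ) =
      ∑ i, (finrank ℝ ((P i → ℝ) ⧸ LinearMap.range (affRestrict (P i))) : ℤ) :=
    Finset.sum_congr rfl fun i _ => by
      rw [← finrank_quotient_range_affRestrict_add_three (hnondeg i)]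
      push_cast
      ring
  rw [hcodim, ← Nat.cast_sum]
  change V.card ≤ finrank ℝ (subdivisionSpace V P) + _ at hdim
  omega

/-- for a subdivision of a convex lattice polygon Δ into convex lattice
polygons Δ₁,…,Δ_N induced by a convex piecewise-linear function, the rank satisfies
rk(S) ≥ |V(S)| − 1 − Σᵢ (|V(Δᵢ)| − 3). -/
theorem rank_lower_bound_for_subdivision
    (N : ℕ) (hN : 0 < N) (P : Fin N → Finset (ℝ × ℝ)) (V : Finset (ℝ × ℝ))
    (hV : ∀ v : ℝ × ℝ, v ∈ V ↔ ∃ i, v ∈ P i)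
    (hlat : ∀ i, ∀ v ∈ P i, ∃ p : ℤ × ℤ, v = toR p)
    (hnondeg : ∀ i, ¬ Collinear ℝ ((P i : Set (ℝ × ℝ))))
    (hvert : ∀ i, ∀ v ∈ P i, v ∈ Set.extremePoints ℝ (convexHull ℝ (P i : Set (ℝ × ℝ))))
    (hdisj : ∀ i j, i ≠ j →
      interior (convexHull ℝ (P i : Set (ℝ × ℝ))) ∩
        interior (convexHull ℝ (P j : Set (ℝ × ℝ))) = ∅)
    (hconv : ∃ ν : ℝ × ℝ → ℝ,
      ConvexOn ℝ (convexHull ℝ (⋃ i, (P i : Set (ℝ × ℝ)))) ν ∧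
      ∀ i, ∃ a : (ℝ × ℝ) →ᵃ[ℝ] ℝ, Set.EqOn ν a (convexHull ℝ (P i : Set (ℝ × ℝ)))) :
    (V.card : ℤ) - 1 - ∑ i, ((P i).card - 3 : ℤ)
      ≤ (Module.finrank ℝ (subdivisionSpace V P) : ℤ) - 1 :=
  rank_lower_bound_for_subdivision_general N P V hnondeg
end

section
/- Let 0 ≤ p < q ≤ m be integers. The parametrized curve x = θ^m, y = θ^p(θ−1)^{q−p} (θ ∈ ℂ) has no singular local branches, and is nodal: there is no point through which three or more distinct parameter values pass, i.e., the system θ^m = θ_1^m = θ_2^m, θ^p(θ−1)^{q−p} = θ_1^p(θ_1−1)^{q−p} = θ_2^p(θ_2−1)^{q−p} has no solutions with θ, θ_1, θ_2 pairwise distinct. -/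
/-!
If three parameter values give the same point, the equation `θ ^ m = θᵢ ^ m` forces
`‖θᵢ‖ = ‖θ‖`, and then `θ ^ p (θ - 1) ^ (q - p) = θᵢ ^ p (θᵢ - 1) ^ (q - p)` forces
`‖θᵢ - 1‖ = ‖θ - 1‖`. So all three values lie on the circles about `0` and `1` through `θ`,
which meet only in `θ` and `conj θ`.
-/

open ComplexConjugate

lemma norm_eq_of_pow_eq_pow {E : Type*} [NormedDivisionRing E] {a b : E} {n : ℕ} (hn : n ≠ 0)
    (h : a ^ n = b ^ n) : ‖a‖ = ‖b‖ := by
  have h' := congrArg (‖·‖) h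
  simp only [norm_pow] at h'
  exact (pow_left_inj₀ (norm_nonneg _) (norm_nonneg _) hn).mp h'

lemma norm_eq_of_pow_mul_pow_eq {E : Type*} [NormedDivisionRing E] {a b c d : E} {k n : ℕ}
    (hn : n ≠ 0) (ha : a ≠ 0) (hac : ‖a‖ = ‖c‖) (h : a ^ k * b ^ n = c ^ k * d ^ n) :
    ‖b‖ = ‖d‖ := by
  have h' := congrArg (‖·‖) h
  simp only [norm_mul, norm_pow, ← hac] at h'
  exact (pow_left_inj₀ (norm_nonneg _) (norm_nonneg _) hn).mp
    (mul_left_cancel₀ (pow_ne_zero _ (norm_ne_zero_iff.mpr ha)) h')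

lemma Complex.eq_or_eq_conj_of_norm_eq_of_norm_sub_one_eq {z w : ℂ} (h₀ : ‖w‖ = ‖z‖)
    (h₁ : ‖w - 1‖ = ‖z - 1‖) : w = z ∨ w = conj z := by
  have n₀ : normSq w = normSq z := by simp only [← Complex.sq_norm, h₀]
  have n₁ : normSq (w - 1) = normSq (z - 1) := by simp only [← Complex.sq_norm, h₁]
  simp only [normSq_apply, sub_re, sub_im, one_re, one_im, sub_zero] at n₀ n₁
  have hre : w.re = z.re := by nlinarith
  have him : w.im ^ 2 = z.im ^ 2 := by nlinarith
  rcases sq_eq_sq_iff_eq_or_eq_neg.mp him with him | him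
  · exact .inl (Complex.ext hre him)
  · exact .inr (Complex.ext (by simp [hre]) (by simp [him]))

/-- The parametrized curve θ ↦ (θ^m, θ^p(θ-1)^{q-p}) has no singular local
branches (the derivative of the first coordinate is nonzero for θ ≠ 0) and is nodal:
no three pairwise distinct parameter values map to the same point. -/
theorem rational_curve_is_nodal (m p q : ℕ) (hpq : p < q) (hqm : q ≤ m) :
    (∀ θ : ℂ, θ ≠ 0 → deriv (fun t : ℂ => t ^ m) θ ≠ 0) ∧
    ∀ θ θ₁ θ₂ : ℂ, θ ≠ θ₁ → θ ≠ θ₂ → θ₁ ≠ θ₂ →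
      ¬ (θ ^ m = θ₁ ^ m ∧ θ ^ m = θ₂ ^ m ∧
         θ ^ p * (θ - 1) ^ (q - p) = θ₁ ^ p * (θ₁ - 1) ^ (q - p) ∧
         θ ^ p * (θ - 1) ^ (q - p) = θ₂ ^ p * (θ₂ - 1) ^ (q - p)) := by
  have hm : m ≠ 0 := by omega
  have hqp : q - p ≠ 0 := by omega
  refine ⟨fun θ hθ => ?_, ?_⟩
  · rw [deriv_pow_field]
    exact mul_ne_zero (Nat.cast_ne_zero.mpr hm) (pow_ne_zero _ hθ)
  rintro θ θ₁ θ₂ h₁ h₂ h₁₂ ⟨hx₁, hx₂, hy₁, hy₂⟩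
  have hθ : θ ≠ 0 := by
    rintro rfl
    rw [zero_pow hm, eq_comm, pow_eq_zero_iff hm] at hx₁ hx₂
    exact h₁₂ (hx₁.trans hx₂.symm)
  have on_circles : ∀ w : ℂ, θ ≠ w → θ ^ m = w ^ m →
      θ ^ p * (θ - 1) ^ (q - p) = w ^ p * (w - 1) ^ (q - p) → w = conj θ := by
    intro w hw hx hy
    have hnorm := norm_eq_of_pow_eq_pow hm hx
    exact (Complex.eq_or_eq_conj_of_norm_eq_of_norm_sub_one_eq hnorm.symm
      (norm_eq_of_pow_mul_pow_eq hqp hθ hnorm hy).symm).resolve_left (Ne.symm hw)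
  exact h₁₂ ((on_circles θ₁ h₁ hx₁ hy₁).trans (on_circles θ₂ h₂ hx₂ hy₂).symm)
end

section
/- There is no convex lattice pentagon in ℝ² whose only integral points are its five vertices. -/
theorem toR_injective : Function.Injective toR := by
  intro a b h
  simp only [toR, Prod.mk.injEq, Int.cast_inj] at h
  exact Prod.ext h.1 h.2

theorem midpoint_notMem_extremePoints {𝕜 E : Type*} [Ring 𝕜] [LinearOrder 𝕜]
    [IsStrictOrderedRing 𝕜] [Invertible (2 : 𝕜)] [AddCommGroup E] [Module 𝕜 E] {A : Set E}
    {x y : E} (hx : x ∈ A) (hy : y ∈ A) (hxy : x ≠ y) :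
    midpoint 𝕜 x y ∉ A.extremePoints 𝕜 := by
  intro h
  obtain ⟨hx', hy'⟩ := (mem_extremePoints.1 h).2 x hx y hy (midpoint_mem_openSegment x y)
  exact hxy (hx'.trans hy'.symm)

theorem Int.exists_cast_eq_add_div_two {a b : ℤ} (h : (a : ZMod 2) = b) :
    ∃ k : ℤ, (k : ℝ) = (a + b) / 2 := by
  obtain ⟨c, hc⟩ := (ZMod.intCast_eq_intCast_iff_dvd_sub a b 2).1 h
  refine ⟨a + c, ?_⟩
  have hb : (b : ℝ) = a + 2 * c := by
    rw [sub_eq_iff_eq_add] at hc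
    rw [hc]; push_cast; ring
  rw [hb]; push_cast; ring

theorem exists_toR_eq_midpoint_of_parity_eq {p q : ℤ × ℤ} (h₁ : (p.1 : ZMod 2) = q.1)
    (h₂ : (p.2 : ZMod 2) = q.2) : ∃ m : ℤ × ℤ, toR m = midpoint ℝ (toR p) (toR q) := by
  obtain ⟨k₁, hk₁⟩ := Int.exists_cast_eq_add_div_two h₁
  obtain ⟨k₂, hk₂⟩ := Int.exists_cast_eq_add_div_two h₂
  refine ⟨(k₁, k₂), Prod.ext ?_ ?_⟩ <;>
    simp only [toR, midpoint_eq_smul_add, invOf_eq_inv, Prod.smul_fst, Prod.smul_snd,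
      Prod.fst_add, Prod.snd_add, smul_eq_mul, hk₁, hk₂] <;> ring

theorem exists_pair_with_lattice_midpoint_of_four_lt_card {P : Finset (ℤ × ℤ)}
    (hP : 4 < P.card) :
    ∃ p ∈ P, ∃ q ∈ P, p ≠ q ∧ ∃ m : ℤ × ℤ, toR m = midpoint ℝ (toR p) (toR q) := by
  have hlt : Fintype.card (ZMod 2 × ZMod 2) < P.card := by simpa using hP
  obtain ⟨p, hp, q, hq, hne, hpq⟩ := Finset.exists_ne_map_eq_of_card_lt_of_maps_to hlt
    (f := fun r : ℤ × ℤ => ((r.1 : ZMod 2), (r.2 : ZMod 2))) (fun _ _ => Finset.mem_univ _)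
  obtain ⟨h₁, h₂⟩ := Prod.ext_iff.1 hpq
  exact ⟨p, hp, q, hq, hne, exists_toR_eq_midpoint_of_parity_eq h₁ h₂⟩

/-- There is no convex lattice pentagon whose only integral points are its
five vertices: any lattice pentagon (five lattice points, all extreme points of their
convex hull) contains a further integral point in its convex hull. -/
theorem no_lattice_pentagon_with_only_vertices (P : Finset (ℤ × ℤ)) (hcard : P.card = 5)
    (hvert : ∀ p ∈ P, toR p ∈ Set.extremePoints ℝ (convexHull ℝ (toR '' ↑P))) :
    ∃ q : ℤ × ℤ, q ∉ P ∧ toR q ∈ convexHull ℝ (toR '' ↑P) := by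
  obtain ⟨p, hp, q, hq, hne, m, hm⟩ :=
    exists_pair_with_lattice_midpoint_of_four_lt_card (P := P) (by omega)
  have hpA : toR p ∈ convexHull ℝ (toR '' ↑P) := subset_convexHull ℝ _ ⟨p, hp, rfl⟩
  have hqA : toR q ∈ convexHull ℝ (toR '' ↑P) := subset_convexHull ℝ _ ⟨q, hq, rfl⟩
  refine ⟨m, fun hmP => ?_, hm ▸ (convex_convexHull ℝ _).midpoint_mem hpA hqA⟩
  exact midpoint_notMem_extremePoints hpA hqA (toR_injective.ne hne) (hm ▸ hvert m hmP)
end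

section
/- A polynomial with Newton polygon the quadrangle Δ₄ = conv{(0,0),(0,1),(1,1),(2,0)}, with coefficients c_{00}, c_{01}, c_{11}, c_{20} ∈ ℂ* at the vertices, defines a curve having a node on the toric divisor Tor([(0,0),(2,0)]) if and only if c_{00} c_{11}² = c_{01}² c_{20}. Moreover, for fixed vertex coefficients satisfying this relation, such a polynomial is unique and the corresponding curve has this node as its only singularity. -/
/-- Second derivative of `F` at `z` as a bilinear expression. -/
noncomputable def D2 (F : ℂ × ℂ → ℂ) (z v w : ℂ × ℂ) : ℂ :=
  iteratedFDeriv ℂ 2 F z ![v, w]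

/-- Third derivative of `F` at `z` as a trilinear expression. -/
noncomputable def D3 (F : ℂ × ℂ → ℂ) (z v w u : ℂ × ℂ) : ℂ :=
  iteratedFDeriv ℂ 3 F z ![v, w, u]

/-- `z` is a singular point of the plane curve `{F = 0}`. -/
def IsSingularAt (F : ℂ × ℂ → ℂ) (z : ℂ × ℂ) : Prop :=
  F z = 0 ∧ fderiv ℂ F z = 0

/-- `z` is a node (A₁ singularity) of `{F = 0}`: a singular point with nondegenerate
Hessian. -/
def IsNode (F : ℂ × ℂ → ℂ) (z : ℂ × ℂ) : Prop :=
  IsSingularAt F z ∧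
    D2 F z (1, 0) (1, 0) * D2 F z (0, 1) (0, 1) - D2 F z (1, 0) (0, 1) ^ 2 ≠ 0

/-- `z` is an ordinary cusp (A₂ singularity) of `{F = 0}`: a singular point whose Hessian
has rank one, with nonvanishing third derivative along the kernel direction. -/
def IsOrdinaryCusp (F : ℂ × ℂ → ℂ) (z : ℂ × ℂ) : Prop :=
  IsSingularAt F z ∧ iteratedFDeriv ℂ 2 F z ≠ 0 ∧
    ∃ v : ℂ × ℂ, v ≠ 0 ∧ (∀ w : ℂ × ℂ, D2 F z v w = 0) ∧ D3 F z v v v ≠ 0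

/-- The polynomial with Newton polygon Δ₄ = conv{(0,0),(0,1),(1,1),(2,0)}, vertex
coefficients c₀₀, c₀₁, c₁₁, c₂₀ and edge coefficient c₁₀. -/
def quadPoly' (c00 c01 c11 c20 c10 : ℂ) : ℂ × ℂ → ℂ := fun z =>
  c00 + c10 * z.1 + c20 * z.1 ^ 2 + c01 * z.2 + c11 * z.1 * z.2

/-! On the line `y = 0` the polynomial is `c₀₀ + c₁₀x + c₂₀x²` and `∂f/∂y = c₀₁ + c₁₁x`, so a singular
point there must sit at `x = -c₀₁/c₁₁`, where the restriction has a double root; this forces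
`c₁₀ = 2c₂₀c₀₁/c₁₁` and then `c₀₀c₁₁² = c₀₁²c₂₀`. Conversely these values give a singular point, and
it is a node because the Hessian determinant of `f` is the constant `-c₁₁²`. Since the partial
derivatives are an invertible affine system when `c₁₁ ≠ 0`, `f` has at most one singular point. -/

open ContinuousLinearMap

noncomputable def quadPoly'FDeriv (c01 c11 c20 c10 : ℂ) (z : ℂ × ℂ) : ℂ × ℂ →L[ℂ] ℂ :=
  (c10 + 2 * c20 * z.1 + c11 * z.2) • fst ℂ ℂ ℂ + (c01 + c11 * z.1) • snd ℂ ℂ ℂ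

lemma quadPoly'FDeriv_apply (c01 c11 c20 c10 : ℂ) (z v : ℂ × ℂ) :
    quadPoly'FDeriv c01 c11 c20 c10 z v
      = (c10 + 2 * c20 * z.1 + c11 * z.2) * v.1 + (c01 + c11 * z.1) * v.2 := by
  simp [quadPoly'FDeriv]

lemma hasFDerivAt_quadPoly' (c00 c01 c11 c20 c10 : ℂ) (z : ℂ × ℂ) :
    HasFDerivAt (quadPoly' c00 c01 c11 c20 c10) (quadPoly'FDeriv c01 c11 c20 c10 z) z := by
  have hx : HasFDerivAt (fun z : ℂ × ℂ => z.1) (fst ℂ ℂ ℂ) z := hasFDerivAt_fst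
  have hy : HasFDerivAt (fun z : ℂ × ℂ => z.2) (snd ℂ ℂ ℂ) z := hasFDerivAt_snd
  have h := ((((hasFDerivAt_const c00 z).add (hx.const_mul c10)).add
    ((hx.pow 2).const_mul c20)).add (hy.const_mul c01)).add ((hx.const_mul c11).mul hy)
  refine h.congr_fderiv (ext fun v => ?_)
  simp only [quadPoly'FDeriv_apply, add_apply, smul_apply, coe_fst', coe_snd', smul_eq_mul,
    zero_add, Nat.add_one_sub_one, pow_one, nsmul_eq_mul, Nat.cast_ofNat]
  ring

lemma fderiv_quadPoly' (c00 c01 c11 c20 c10 : ℂ) :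
    fderiv ℂ (quadPoly' c00 c01 c11 c20 c10) = quadPoly'FDeriv c01 c11 c20 c10 :=
  funext fun z => (hasFDerivAt_quadPoly' c00 c01 c11 c20 c10 z).fderiv

lemma D2_quadPoly' (c00 c01 c11 c20 c10 : ℂ) (z v w : ℂ × ℂ) :
    D2 (quadPoly' c00 c01 c11 c20 c10) z v w
      = 2 * c20 * v.1 * w.1 + c11 * v.1 * w.2 + c11 * v.2 * w.1 := by
  have hx : HasFDerivAt (fun z : ℂ × ℂ => z.1) (fst ℂ ℂ ℂ) z := hasFDerivAt_fst
  have hy : HasFDerivAt (fun z : ℂ × ℂ => z.2) (snd ℂ ℂ ℂ) z := hasFDerivAt_snd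
  have hdx := (((hasFDerivAt_const c10 z).add (hx.const_mul (2 * c20))).add
    (hy.const_mul c11)).smul_const (fst ℂ ℂ ℂ)
  have hdy := ((hasFDerivAt_const c01 z).add (hx.const_mul c11)).smul_const (snd ℂ ℂ ℂ)
  have hD : HasFDerivAt (quadPoly'FDeriv c01 c11 c20 c10) _ z := hdx.add hdy
  rw [D2, iteratedFDeriv_two_apply, fderiv_quadPoly', hD.fderiv]
  simp only [Fin.isValue, Matrix.cons_val_zero, Matrix.cons_val_one, Matrix.cons_val_fin_one,
    zero_add, add_apply, smulRight_apply, smul_apply, coe_fst', coe_snd', smul_eq_mul]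
  ring

lemma hessian_quadPoly' (c00 c01 c11 c20 c10 : ℂ) (z : ℂ × ℂ) :
    D2 (quadPoly' c00 c01 c11 c20 c10) z (1, 0) (1, 0)
        * D2 (quadPoly' c00 c01 c11 c20 c10) z (0, 1) (0, 1)
      - D2 (quadPoly' c00 c01 c11 c20 c10) z (1, 0) (0, 1) ^ 2 = -c11 ^ 2 := by
  simp only [D2_quadPoly']
  ring

lemma isSingularAt_quadPoly'_iff (c00 c01 c11 c20 c10 : ℂ) (w : ℂ × ℂ) :
    IsSingularAt (quadPoly' c00 c01 c11 c20 c10) w ↔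
      quadPoly' c00 c01 c11 c20 c10 w = 0 ∧
        c10 + 2 * c20 * w.1 + c11 * w.2 = 0 ∧ c01 + c11 * w.1 = 0 := by
  rw [IsSingularAt, fderiv_quadPoly']
  refine and_congr_right fun _ => ⟨fun h => ?_, fun ⟨hx, hy⟩ => ext fun v => ?_⟩
  · have hx := congrArg (· (1, 0)) h
    have hy := congrArg (· (0, 1)) h
    simp only [quadPoly'FDeriv_apply, zero_apply] at hx hy
    exact ⟨by linear_combination hx, by linear_combination hy⟩
  · simp [quadPoly'FDeriv_apply, hx, hy]

section
variable {c00 c01 c11 c20 c10 : ℂ}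

lemma isNode_quadPoly'_iff (h11 : c11 ≠ 0) (z : ℂ × ℂ) :
    IsNode (quadPoly' c00 c01 c11 c20 c10) z ↔ IsSingularAt (quadPoly' c00 c01 c11 c20 c10) z := by
  rw [IsNode, hessian_quadPoly', neg_ne_zero]
  exact and_iff_left (pow_ne_zero 2 h11)

lemma IsSingularAt.quadPoly'_eq (h11 : c11 ≠ 0) {w w' : ℂ × ℂ}
    (hw : IsSingularAt (quadPoly' c00 c01 c11 c20 c10) w)
    (hw' : IsSingularAt (quadPoly' c00 c01 c11 c20 c10) w') : w = w' := by
  obtain ⟨-, hx, hy⟩ := (isSingularAt_quadPoly'_iff ..).1 hw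
  obtain ⟨-, hx', hy'⟩ := (isSingularAt_quadPoly'_iff ..).1 hw'
  have h1 : w.1 = w'.1 := mul_left_cancel₀ h11 (by linear_combination hy - hy')
  have h2 : w.2 = w'.2 :=
    mul_left_cancel₀ h11 (by linear_combination hx - hx' - 2 * c20 * h1)
  exact Prod.ext h1 h2

lemma isSingularAt_quadPoly'_divisor_iff (h11 : c11 ≠ 0) (x : ℂ) :
    IsSingularAt (quadPoly' c00 c01 c11 c20 c10) (x, 0) ↔
      x = -c01 / c11 ∧ c10 = 2 * c20 * c01 / c11 ∧ c00 * c11 ^ 2 = c01 ^ 2 * c20 := by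
  simp only [isSingularAt_quadPoly'_iff, quadPoly', mul_zero, add_zero]
  rw [eq_div_iff h11, eq_div_iff h11]
  constructor
  · rintro ⟨hF, h10, h01⟩
    refine ⟨by linear_combination h01, by linear_combination c11 * h10 - 2 * c20 * h01, ?_⟩
    linear_combination c11 ^ 2 * hF - c11 ^ 2 * x * h10 + c20 * (c11 * x - c01) * h01
  · rintro ⟨hx, h10, hrel⟩
    refine ⟨mul_left_cancel₀ (pow_ne_zero 2 h11) ?_, ?_, by linear_combination hx⟩
    · linear_combination hrel + x * c11 * h10 + (c20 * x * c11 + c20 * c01) * hx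
    · exact mul_left_cancel₀ h11 (by linear_combination h10 + 2 * c20 * hx)

lemma exists_node_on_divisor_quadPoly'_iff (h01 : c01 ≠ 0) (h11 : c11 ≠ 0) :
    (∃ z : ℂ × ℂ, z.1 ≠ 0 ∧ z.2 = 0 ∧ IsNode (quadPoly' c00 c01 c11 c20 c10) z) ↔
      c10 = 2 * c20 * c01 / c11 ∧ c00 * c11 ^ 2 = c01 ^ 2 * c20 := by
  simp only [isNode_quadPoly'_iff h11]
  constructor
  · rintro ⟨⟨x, y⟩, -, rfl, hs⟩
    exact ((isSingularAt_quadPoly'_divisor_iff h11 x).1 hs).2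
  · rintro ⟨h10, hrel⟩
    refine ⟨(-c01 / c11, 0), div_ne_zero (neg_ne_zero.2 h01) h11, rfl, ?_⟩
    exact (isSingularAt_quadPoly'_divisor_iff h11 _).2 ⟨rfl, h10, hrel⟩

end

theorem node_on_divisor_condition_quadrangle_general
    (c00 c01 c11 c20 : ℂ) (h01 : c01 ≠ 0) (h11 : c11 ≠ 0) :
    ((∃ c10 : ℂ, ∃ z : ℂ × ℂ, z.1 ≠ 0 ∧ z.2 = 0 ∧
        IsNode (quadPoly' c00 c01 c11 c20 c10) z)
      ↔ c00 * c11 ^ 2 = c01 ^ 2 * c20) ∧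
    (c00 * c11 ^ 2 = c01 ^ 2 * c20 →
      ∃! c10 : ℂ, ∃ z : ℂ × ℂ, z.1 ≠ 0 ∧ z.2 = 0 ∧
        IsNode (quadPoly' c00 c01 c11 c20 c10) z) ∧
    (∀ c10 : ℂ, ∀ z : ℂ × ℂ, z.1 ≠ 0 ∧ z.2 = 0 ∧
        IsNode (quadPoly' c00 c01 c11 c20 c10) z →
      ∀ w : ℂ × ℂ, w.1 ≠ 0 →
        IsSingularAt (quadPoly' c00 c01 c11 c20 c10) w → w = z) := by
  simp only [exists_node_on_divisor_quadPoly'_iff h01 h11]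
  refine ⟨by simp, fun hrel => ⟨_, ⟨rfl, hrel⟩, fun _ h => h.1⟩, ?_⟩
  rintro c10 z ⟨-, -, hz⟩ w - hw
  exact hw.quadPoly'_eq h11 ((isNode_quadPoly'_iff h11 z).1 hz)

/-- a polynomial with Newton polygon Δ₄ and vertex coefficients
c₀₀, c₀₁, c₁₁, c₂₀ ∈ ℂ* defines a curve with a node on the toric divisor
Tor([(0,0),(2,0)]) = {y = 0} iff c₀₀c₁₁² = c₀₁²c₂₀; moreover the remaining coefficient is
then unique and this node is the only singularity. -/
theorem node_on_divisor_condition_quadrangle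
    (c00 c01 c11 c20 : ℂ) (h00 : c00 ≠ 0) (h01 : c01 ≠ 0) (h11 : c11 ≠ 0) (h20 : c20 ≠ 0) :
    ((∃ c10 : ℂ, ∃ z : ℂ × ℂ, z.1 ≠ 0 ∧ z.2 = 0 ∧
        IsNode (quadPoly' c00 c01 c11 c20 c10) z)
      ↔ c00 * c11 ^ 2 = c01 ^ 2 * c20) ∧
    (c00 * c11 ^ 2 = c01 ^ 2 * c20 →
      ∃! c10 : ℂ, ∃ z : ℂ × ℂ, z.1 ≠ 0 ∧ z.2 = 0 ∧
        IsNode (quadPoly' c00 c01 c11 c20 c10) z) ∧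
    (∀ c10 : ℂ, ∀ z : ℂ × ℂ, z.1 ≠ 0 ∧ z.2 = 0 ∧
        IsNode (quadPoly' c00 c01 c11 c20 c10) z →
      ∀ w : ℂ × ℂ, w.1 ≠ 0 →
        IsSingularAt (quadPoly' c00 c01 c11 c20 c10) w → w = z) :=
  node_on_divisor_condition_quadrangle_general c00 c01 c11 c20 h01 h11
end

section
/- There exist exactly three polynomials F(x,y) = y³ + c y x² + d + a y + b y² (after suitable normalization, F(x,y) = y³ + yx² + 1 + ay + by², with a, b ∈ ℂ ranging) such that the curve {F = 0} has an ordinary cusp as its only singularity in ℂ². Specifically, the cuspidal condition is equivalent to y³ + by² + ay + 1 = (y + α)³ with α³ = 1, giving three solutions. -/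
/-- The normalized family F(x,y) = y³ + yx² + 1 + ay + by². -/
def cuspFamily (a b : ℂ) : ℂ × ℂ → ℂ := fun z =>
  z.2 ^ 3 + z.2 * z.1 ^ 2 + 1 + a * z.2 + b * z.2 ^ 2

lemma iteratedFDeriv_three_apply {𝕜 E F : Type*} [NontriviallyNormedField 𝕜]
    [NormedAddCommGroup E] [NormedSpace 𝕜 E] [NormedAddCommGroup F] [NormedSpace 𝕜 F]
    (f : E → F) (z : E) (m : Fin 3 → E) :
    iteratedFDeriv 𝕜 3 f z m = fderiv 𝕜 (fderiv 𝕜 (fderiv 𝕜 f)) z (m 0) (m 1) (m 2) := by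
  rw [iteratedFDeriv_succ_apply_right, iteratedFDeriv_two_apply]
  rfl

lemma ncard_pow_eq_one (n : ℕ) [NeZero n] : {α : ℂ | α ^ n = 1}.ncard = n := by
  have hroots : {α : ℂ | α ^ n = 1} = ↑(Polynomial.nthRootsFinset n (1 : ℂ)) := by
    ext α
    simp [Polynomial.mem_nthRootsFinset (Nat.pos_of_neZero n)]
  rw [hroots, Set.ncard_coe_finset,
    (Complex.isPrimitiveRoot_exp n (NeZero.ne n)).card_nthRootsFinset]

lemma forall_cubic_eq_cube_iff (a b α : ℂ) :
    (∀ y : ℂ, y ^ 3 + b * y ^ 2 + a * y + 1 = (y + α) ^ 3) ↔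
      α ^ 3 = 1 ∧ a = 3 * α ^ 2 ∧ b = 3 * α := by
  constructor
  · intro h
    have hα : α ^ 3 = 1 := by linear_combination -h 0
    refine ⟨hα, ?_, ?_⟩
    · linear_combination (h 1) / 2 - (h (-1)) / 2
    · linear_combination (h 1) / 2 + (h (-1)) / 2 + hα
  · rintro ⟨hα, rfl, rfl⟩ y
    linear_combination -hα

section Derivatives

open ContinuousLinearMap

local notation "X" => fst ℂ ℂ ℂ
local notation "Y" => snd ℂ ℂ ℂ

noncomputable def cuspFamilyDifferential (a b : ℂ) (z : ℂ × ℂ) : ℂ × ℂ →L[ℂ] ℂ :=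
  (2 * z.1 * z.2) • X + (3 * z.2 ^ 2 + z.1 ^ 2 + a + 2 * b * z.2) • Y

noncomputable def cuspFamilyHessian (b : ℂ) (z : ℂ × ℂ) : ℂ × ℂ →L[ℂ] ℂ × ℂ →L[ℂ] ℂ :=
  (2 * z.2) • smulRight X X + (2 * z.1) • (smulRight X Y + smulRight Y X) +
    (6 * z.2 + 2 * b) • smulRight Y Y

lemma hasFDerivAt_cuspFamily (a b : ℂ) (z : ℂ × ℂ) :
    HasFDerivAt (cuspFamily a b) (cuspFamilyDifferential a b z) z := by
  have hx : HasFDerivAt (fun w : ℂ × ℂ => w.1) X z := hasFDerivAt_fst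
  have hy : HasFDerivAt (fun w : ℂ × ℂ => w.2) Y z := hasFDerivAt_snd
  have h : HasFDerivAt (cuspFamily a b) _ z :=
    ((((hy.pow 3).add (hy.mul (hx.pow 2))).add_const 1).add (hy.const_mul a)).add
      ((hy.pow 2).const_mul b)
  refine h.congr_fderiv (ext fun w => ?_)
  simp [cuspFamilyDifferential]
  ring

lemma fderiv_cuspFamily (a b : ℂ) : fderiv ℂ (cuspFamily a b) = cuspFamilyDifferential a b :=
  funext fun z => (hasFDerivAt_cuspFamily a b z).fderiv

lemma hasFDerivAt_cuspFamilyDifferential (a b : ℂ) (z : ℂ × ℂ) :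
    HasFDerivAt (cuspFamilyDifferential a b) (cuspFamilyHessian b z) z := by
  have hx : HasFDerivAt (fun w : ℂ × ℂ => w.1) X z := hasFDerivAt_fst
  have hy : HasFDerivAt (fun w : ℂ × ℂ => w.2) Y z := hasFDerivAt_snd
  have h : HasFDerivAt (cuspFamilyDifferential a b) _ z :=
    (((hx.const_mul 2).mul hy).smul_const X).add
      (((((hy.pow 2).const_mul 3).add (hx.pow 2)).add_const a).add (hy.const_mul (2 * b))
        |>.smul_const Y)
  refine h.congr_fderiv (ext fun v => ext fun w => ?_)
  simp only [add_apply, smul_apply, smulRight_apply, coe_fst', coe_snd', smul_eq_mul,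
    cuspFamilyHessian]
  ring

lemma fderiv_fderiv_cuspFamily (a b : ℂ) :
    fderiv ℂ (fderiv ℂ (cuspFamily a b)) = cuspFamilyHessian b := by
  rw [fderiv_cuspFamily]
  exact funext fun z => (hasFDerivAt_cuspFamilyDifferential a b z).fderiv

-- The Hessian is affine in `z`, with linear part `cuspFamilyHessian 0`.
lemma fderiv_cuspFamilyHessian_apply (b : ℂ) (z v : ℂ × ℂ) :
    fderiv ℂ (cuspFamilyHessian b) z v = cuspFamilyHessian 0 v := by
  have hx : HasFDerivAt (fun w : ℂ × ℂ => w.1) X z := hasFDerivAt_fst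
  have hy : HasFDerivAt (fun w : ℂ × ℂ => w.2) Y z := hasFDerivAt_snd
  -- instance search does not find this one by itself
  have : IsBoundedSMul ℂ (ℂ × ℂ →L[ℂ] ℂ × ℂ →L[ℂ] ℂ) :=
    @NormedSpace.toIsBoundedSMul ℂ (ℂ × ℂ →L[ℂ] ℂ × ℂ →L[ℂ] ℂ) _ _ inferInstance
  have h : HasFDerivAt (cuspFamilyHessian b) _ z :=
    (((hy.const_mul 2).smul_const (smulRight X X)).add
      ((hx.const_mul 2).smul_const (smulRight X Y + smulRight Y X))).add
      (((hy.const_mul 6).add_const (2 * b)).smul_const (smulRight Y Y))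
  rw [h.fderiv]
  refine ext fun u => ext fun w => ?_
  simp only [add_apply, smul_apply, smulRight_apply, coe_fst', coe_snd', smul_eq_mul,
    cuspFamilyHessian]
  ring

lemma D2_cuspFamily (a b : ℂ) (z v w : ℂ × ℂ) :
    D2 (cuspFamily a b) z v w =
      2 * z.2 * v.1 * w.1 + 2 * z.1 * (v.1 * w.2 + v.2 * w.1) + (6 * z.2 + 2 * b) * v.2 * w.2 := by
  rw [D2, iteratedFDeriv_two_apply, fderiv_fderiv_cuspFamily]
  simp only [Matrix.cons_val_zero, Matrix.cons_val_one, cuspFamilyHessian, add_apply,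
    smul_apply, smulRight_apply, coe_fst', coe_snd', smul_eq_mul]
  ring

lemma D3_cuspFamily (a b : ℂ) (z v w u : ℂ × ℂ) :
    D3 (cuspFamily a b) z v w u =
      2 * v.1 * (w.1 * u.2 + w.2 * u.1) + v.2 * (2 * w.1 * u.1 + 6 * w.2 * u.2) := by
  rw [D3, iteratedFDeriv_three_apply, fderiv_fderiv_cuspFamily]
  simp only [Matrix.cons_val_zero, Matrix.cons_val_one, Matrix.cons_val_two,
    Matrix.tail_cons, Matrix.head_cons, fderiv_cuspFamilyHessian_apply, cuspFamilyHessian,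
    add_apply, smul_apply, smulRight_apply, coe_fst', coe_snd', smul_eq_mul]
  ring

lemma cuspFamilyDifferential_eq_zero_iff (a b : ℂ) (z : ℂ × ℂ) :
    cuspFamilyDifferential a b z = 0 ↔
      2 * z.1 * z.2 = 0 ∧ 3 * z.2 ^ 2 + z.1 ^ 2 + a + 2 * b * z.2 = 0 := by
  constructor
  · intro h
    have h₁ := congr($h (1, 0))
    have h₂ := congr($h (0, 1))
    simp only [cuspFamilyDifferential, add_apply, smul_apply, coe_fst', coe_snd', smul_eq_mul,
      zero_apply] at h₁ h₂
    exact ⟨by simpa using h₁, by simpa using h₂⟩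
  · rintro ⟨h₁, h₂⟩
    refine ext fun w => ?_
    simp [cuspFamilyDifferential, h₁, h₂]

end Derivatives

lemma isSingularAt_cuspFamily_iff (a b : ℂ) (z : ℂ × ℂ) :
    IsSingularAt (cuspFamily a b) z ↔
      z.1 = 0 ∧ z.2 ^ 3 + b * z.2 ^ 2 + a * z.2 + 1 = 0 ∧ 3 * z.2 ^ 2 + 2 * b * z.2 + a = 0 := by
  rw [IsSingularAt, fderiv_cuspFamily, cuspFamilyDifferential_eq_zero_iff]
  constructor
  · rintro ⟨hF, hx, hy⟩
    have hz₂ : z.2 ≠ 0 := by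
      rintro h
      simp [cuspFamily, h] at hF
    have hz₁ : z.1 = 0 := by simpa [hz₂] using hx
    refine ⟨hz₁, ?_, ?_⟩
    · simp only [cuspFamily, hz₁] at hF
      linear_combination hF
    · simp only [hz₁] at hy
      linear_combination hy
  · rintro ⟨hz₁, hg, hg'⟩
    simp only [cuspFamily, hz₁]
    exact ⟨by linear_combination hg, by ring, by linear_combination hg'⟩

lemma eq_of_isSingularAt_cuspFamily {α : ℂ} (hα : α ^ 3 = 1) {w : ℂ × ℂ}
    (hw : IsSingularAt (cuspFamily (3 * α ^ 2) (3 * α)) w) : w = (0, -α) := by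
  obtain ⟨hw₁, hg, -⟩ := (isSingularAt_cuspFamily_iff _ _ w).1 hw
  have : (w.2 + α) ^ 3 = 0 := by linear_combination hg + hα
  exact Prod.ext hw₁ (eq_neg_of_add_eq_zero_left (pow_eq_zero_iff three_ne_zero |>.1 this))

lemma isOrdinaryCusp_cuspFamily {α : ℂ} (hα : α ^ 3 = 1) :
    IsOrdinaryCusp (cuspFamily (3 * α ^ 2) (3 * α)) (0, -α) := by
  have hα₀ : α ≠ 0 := by rintro rfl; norm_num at hα
  refine ⟨?_, fun h => ?_, (0, 1), by simp, fun w => ?_, ?_⟩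
  · rw [isSingularAt_cuspFamily_iff]
    exact ⟨rfl, by linear_combination -hα, by ring⟩
  · have h₁₁ : D2 (cuspFamily (3 * α ^ 2) (3 * α)) (0, -α) (1, 0) (1, 0) = 0 := by
      simp [D2, h]
    rw [D2_cuspFamily] at h₁₁
    exact hα₀ (by linear_combination -h₁₁ / 2)
  · rw [D2_cuspFamily]
    ring
  · rw [D3_cuspFamily]
    norm_num

lemma exists_eq_of_isOrdinaryCusp_cuspFamily {a b : ℂ} {z : ℂ × ℂ}
    (hz : IsOrdinaryCusp (cuspFamily a b) z) :
    ∃ α : ℂ, α ^ 3 = 1 ∧ a = 3 * α ^ 2 ∧ b = 3 * α ∧ z = (0, -α) := by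
  obtain ⟨hsing, -, v, hv, hker, -⟩ := hz
  obtain ⟨hz₁, hg, hg'⟩ := (isSingularAt_cuspFamily_iff a b z).1 hsing
  have hz₂ : z.2 ≠ 0 := by rintro h; simp [h] at hg
  have h₁ := hker (1, 0)
  have h₂ := hker (0, 1)
  simp only [D2_cuspFamily, hz₁] at h₁ h₂
  have hv₁ : v.1 = 0 := by simpa [hz₂] using h₁
  have hv₂ : v.2 ≠ 0 := fun h => hv (Prod.ext hv₁ h)
  have hb : b = -3 * z.2 := by
    have : 6 * z.2 + 2 * b = 0 := by simpa [hv₂] using h₂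
    linear_combination this / 2
  have ha : a = 3 * z.2 ^ 2 := by linear_combination hg' - 2 * z.2 * hb
  refine ⟨-z.2, ?_, by rw [ha]; ring, by rw [hb]; ring, Prod.ext hz₁ (neg_neg _).symm⟩
  linear_combination -hg + z.2 ^ 2 * hb + z.2 * ha

lemma exists_isOrdinaryCusp_cuspFamily_iff (a b : ℂ) :
    (∃ z : ℂ × ℂ, IsOrdinaryCusp (cuspFamily a b) z) ↔
      ∃ α : ℂ, α ^ 3 = 1 ∧ a = 3 * α ^ 2 ∧ b = 3 * α := by
  constructor
  · rintro ⟨z, hz⟩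
    obtain ⟨α, hα, ha, hb, -⟩ := exists_eq_of_isOrdinaryCusp_cuspFamily hz
    exact ⟨α, hα, ha, hb⟩
  · rintro ⟨α, hα, rfl, rfl⟩
    exact ⟨(0, -α), isOrdinaryCusp_cuspFamily hα⟩

lemma setOf_unique_isOrdinaryCusp_cuspFamily :
    {ab : ℂ × ℂ | ∃ z : ℂ × ℂ, IsOrdinaryCusp (cuspFamily ab.1 ab.2) z ∧
      ∀ w : ℂ × ℂ, IsSingularAt (cuspFamily ab.1 ab.2) w → w = z} =
      (fun α : ℂ => (3 * α ^ 2, 3 * α)) '' {α : ℂ | α ^ 3 = 1} := by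
  ext ⟨a, b⟩
  constructor
  · rintro ⟨z, hz, -⟩
    obtain ⟨α, hα, ha, hb, -⟩ := exists_eq_of_isOrdinaryCusp_cuspFamily hz
    exact ⟨α, hα, Prod.ext ha.symm hb.symm⟩
  · rintro ⟨α, hα, h⟩
    obtain ⟨rfl, rfl⟩ := Prod.mk.inj h
    exact ⟨(0, -α), isOrdinaryCusp_cuspFamily hα, fun w => eq_of_isSingularAt_cuspFamily hα⟩

/-- the curve {y³ + yx² + 1 + ay + by² = 0} has a cusp iff
y³ + by² + ay + 1 = (y+α)³ for some cube root of unity α, and there exist exactly three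
pairs (a,b) for which the curve has an ordinary cusp as its only singularity in ℂ². -/
theorem three_cuspidal_members :
    (∀ a b : ℂ, (∃ z : ℂ × ℂ, IsOrdinaryCusp (cuspFamily a b) z) ↔
      ∃ α : ℂ, α ^ 3 = 1 ∧ ∀ y : ℂ, y ^ 3 + b * y ^ 2 + a * y + 1 = (y + α) ^ 3) ∧
    Set.ncard {ab : ℂ × ℂ | ∃ z : ℂ × ℂ, IsOrdinaryCusp (cuspFamily ab.1 ab.2) z ∧
      ∀ w : ℂ × ℂ, IsSingularAt (cuspFamily ab.1 ab.2) w → w = z} = 3 := by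
  refine ⟨fun a b => ?_, ?_⟩
  · simp only [exists_isOrdinaryCusp_cuspFamily_iff, forall_cubic_eq_cube_iff, and_self_left]
  · have hinj : Set.InjOn (fun α : ℂ => (3 * α ^ 2, 3 * α)) {α : ℂ | α ^ 3 = 1} :=
      fun α _ β _ h => by simpa using congr_arg Prod.snd h
    rw [setOf_unique_isOrdinaryCusp_cuspFamily, hinj.ncard_image, ncard_pow_eq_one]
end

section
/- Let m ≥ 2 and let P(x) = cos(m·arccos(2^{−(m−1)/m} x)) be the normalized Chebyshev polynomial. Then the curve {y² + 2yP(x) + 1 = 0} ⊂ ℂ² has exactly m−1 singular points, all of which are real solitary nodes (locally of the form u² + v² = 0 in real coordinates). -/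
/-- Real second derivative of `F` at `z` as a bilinear expression. -/
noncomputable def D2R (F : ℝ × ℝ → ℝ) (z v w : ℝ × ℝ) : ℝ :=
  iteratedFDeriv ℝ 2 F z ![v, w]

open Polynomial ContinuousLinearMap

section QuadCurve

variable {K : Type*} [NontriviallyNormedField K]

noncomputable def quadCurve (p : K[X]) (z : K × K) : K :=
  z.2 ^ 2 + 2 * z.2 * p.eval z.1 + 1

variable (K) in
noncomputable def pairingCLM : (K × K) →L[K] ((K × K) →L[K] K) :=
  (fst K K K).smulRight (fst K K K) + (snd K K K).smulRight (snd K K K)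

@[simp]
lemma pairingCLM_apply (a v : K × K) : pairingCLM K a v = a.1 * v.1 + a.2 * v.2 := by
  simp [pairingCLM, smul_eq_mul]

lemma pairingCLM_eq_zero_iff (a : K × K) : pairingCLM K a = 0 ↔ a = 0 := by
  refine ⟨fun h => Prod.ext ?_ ?_, fun h => h ▸ map_zero _⟩
  · simpa using congrArg (· (1, 0)) h
  · simpa using congrArg (· (0, 1)) h

lemma hasFDerivAt_snd_mul_eval_fst (q : K[X]) (z : K × K) :
    HasFDerivAt (fun z : K × K => 2 * z.2 * q.eval z.1)
      (pairingCLM K (2 * z.2 * q.derivative.eval z.1, 2 * q.eval z.1)) z := by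
  have hq : HasFDerivAt (fun z : K × K => q.eval z.1) (q.derivative.eval z.1 • fst K K K) z :=
    (q.hasDerivAt z.1).comp_hasFDerivAt z hasFDerivAt_fst
  refine ((hasFDerivAt_snd.const_mul 2).mul hq).congr_fderiv ?_
  refine ContinuousLinearMap.ext fun v => ?_
  simp
  ring

lemma hasFDerivAt_snd_add_eval_fst (q : K[X]) (z : K × K) :
    HasFDerivAt (fun z : K × K => 2 * z.2 + 2 * q.eval z.1)
      (pairingCLM K (2 * q.derivative.eval z.1, 2)) z := by
  have hq : HasFDerivAt (fun z : K × K => q.eval z.1) (q.derivative.eval z.1 • fst K K K) z :=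
    (q.hasDerivAt z.1).comp_hasFDerivAt z hasFDerivAt_fst
  refine ((hasFDerivAt_snd.const_mul 2).add (hq.const_mul 2)).congr_fderiv ?_
  refine ContinuousLinearMap.ext fun v => ?_
  simp
  ring

lemma hasFDerivAt_quadCurve (p : K[X]) (z : K × K) :
    HasFDerivAt (quadCurve p)
      (pairingCLM K (2 * z.2 * p.derivative.eval z.1, 2 * z.2 + 2 * p.eval z.1)) z := by
  refine (((hasFDerivAt_snd.pow 2).add (hasFDerivAt_snd_mul_eval_fst p z)).add_const 1
    ).congr_fderiv ?_
  refine ContinuousLinearMap.ext fun v => ?_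
  simp
  ring

lemma iteratedFDeriv_two_quadCurve (p : K[X]) (z v w : K × K) :
    iteratedFDeriv K 2 (quadCurve p) z ![v, w] =
      (2 * z.2 * p.derivative.derivative.eval z.1 * v.1 + 2 * p.derivative.eval z.1 * v.2) * w.1
        + (2 * p.derivative.eval z.1 * v.1 + 2 * v.2) * w.2 := by
  have hfd : fderiv K (quadCurve p) = fun z =>
      pairingCLM K (2 * z.2 * p.derivative.eval z.1, 2 * z.2 + 2 * p.eval z.1) :=
    funext fun z => (hasFDerivAt_quadCurve p z).fderiv
  have hfd2 : fderiv K (fun z : K × K =>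
      pairingCLM K (2 * z.2 * p.derivative.eval z.1, 2 * z.2 + 2 * p.eval z.1)) z =
      (pairingCLM K).comp
        ((pairingCLM K (2 * z.2 * p.derivative.derivative.eval z.1, 2 * p.derivative.eval z.1)).prod
          (pairingCLM K (2 * p.derivative.eval z.1, 2))) :=
    ((pairingCLM K).hasFDerivAt.comp z ((hasFDerivAt_snd_mul_eval_fst p.derivative z).prodMk
      (hasFDerivAt_snd_add_eval_fst p z))).fderiv
  rw [iteratedFDeriv_two_apply, hfd, hfd2]
  simp

lemma quadCurve_hessian_det (p : K[X]) (z : K × K) :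
    iteratedFDeriv K 2 (quadCurve p) z ![(1, 0), (1, 0)] *
        iteratedFDeriv K 2 (quadCurve p) z ![(0, 1), (0, 1)] -
      iteratedFDeriv K 2 (quadCurve p) z ![(1, 0), (0, 1)] ^ 2 =
      4 * z.2 * p.derivative.derivative.eval z.1 - 4 * p.derivative.eval z.1 ^ 2 := by
  simp only [iteratedFDeriv_two_quadCurve]
  ring

lemma quadCurve_hessian_det_of_isRoot (p : K[X]) {x : K}
    (hx : p.derivative.IsRoot x) :
    iteratedFDeriv K 2 (quadCurve p) (x, -p.eval x) ![(1, 0), (1, 0)] *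
        iteratedFDeriv K 2 (quadCurve p) (x, -p.eval x) ![(0, 1), (0, 1)] -
      iteratedFDeriv K 2 (quadCurve p) (x, -p.eval x) ![(1, 0), (0, 1)] ^ 2 =
      -4 * (p.eval x * p.derivative.derivative.eval x) := by
  rw [quadCurve_hessian_det, hx.eq_zero]
  ring

end QuadCurve

lemma isSingularAt_quadCurve_iff (p : ℂ[X]) (z : ℂ × ℂ) :
    IsSingularAt (quadCurve p) z ↔
      p.derivative.IsRoot z.1 ∧ p.eval z.1 ^ 2 = 1 ∧ z.2 = -p.eval z.1 := by
  obtain ⟨x, y⟩ := z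
  dsimp only
  have hgrad : pairingCLM ℂ (2 * y * p.derivative.eval x, 2 * y + 2 * p.eval x) = 0 ↔
      y * p.derivative.eval x = 0 ∧ y = -p.eval x := by
    simp only [pairingCLM_eq_zero_iff, Prod.mk_eq_zero, mul_assoc, mul_eq_zero, two_ne_zero,
      false_or]
    exact and_congr_right'
      ⟨fun h => by linear_combination h / 2, fun h => by linear_combination 2 * h⟩
  rw [IsSingularAt, (hasFDerivAt_quadCurve p _).fderiv, hgrad, quadCurve]
  constructor
  · rintro ⟨hF, hy0, rfl⟩
    have hsq : p.eval x ^ 2 = 1 := by linear_combination -hF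
    have hne : -p.eval x ≠ 0 := by
      intro h
      simp [neg_eq_zero.1 h] at hsq
    exact ⟨(mul_eq_zero.1 hy0).resolve_left hne, hsq, rfl⟩
  · rintro ⟨hroot, hsq, rfl⟩
    exact ⟨by linear_combination -hsq, by simp [hroot.eq_zero], rfl⟩

lemma setOf_isSingularAt_quadCurve (p : ℂ[X])
    (hcrit : ∀ x, p.derivative.IsRoot x → p.eval x ^ 2 = 1) :
    {z | IsSingularAt (quadCurve p) z} =
      (fun x => (x, -p.eval x)) '' {x | p.derivative.IsRoot x} := by
  ext ⟨x, y⟩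
  simp only [Set.mem_ofPred_eq, isSingularAt_quadCurve_iff, Set.mem_image, Prod.mk.injEq]
  constructor
  · rintro ⟨hroot, -, rfl⟩
    exact ⟨x, hroot, rfl, rfl⟩
  · rintro ⟨x, hroot, rfl, rfl⟩
    exact ⟨hroot, hcrit x hroot, rfl⟩

lemma Polynomial.setOf_isRoot_eq_of_natDegree_le_card {R : Type*} [CommRing R] [IsDomain R]
    [DecidableEq R] {q : R[X]} (hq : q ≠ 0) {S : Finset R} (hS : ∀ x ∈ S, q.IsRoot x)
    (hcard : q.natDegree ≤ S.card) : {x | q.IsRoot x} = S := by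
  have hsub : S ⊆ q.roots.toFinset := fun x hx => by
    simpa [Multiset.mem_toFinset, mem_roots hq] using hS x hx
  have hS_eq := Finset.eq_of_subset_of_card_le hsub
    (hcard.trans' ((Multiset.toFinset_card_le _).trans (card_roots' q)))
  ext x
  simp [hS_eq, mem_roots hq]

lemma eval_map_ofReal (p : ℝ[X]) (x : ℝ) : (p.map (algebraMap ℝ ℂ)).eval (x : ℂ) = p.eval x := by
  rw [eval_map_algebraMap]
  exact aeval_algebraMap_apply_eq_algebraMap_eval x p

lemma isNode_quadCurve_map_ofReal (P : ℝ[X]) {x : ℝ}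
    (hsing : IsSingularAt (quadCurve (P.map (algebraMap ℝ ℂ))) (x, -((P.eval x : ℝ) : ℂ)))
    (hx : P.derivative.IsRoot x) (hne : P.eval x * P.derivative.derivative.eval x ≠ 0) :
    IsNode (quadCurve (P.map (algebraMap ℝ ℂ))) (x, -((P.eval x : ℝ) : ℂ)) := by
  have hxℂ : (P.map (algebraMap ℝ ℂ)).derivative.IsRoot x := by
    rw [IsRoot, derivative_map, eval_map_ofReal, hx.eq_zero, Complex.ofReal_zero]
  refine ⟨hsing, ?_⟩
  unfold D2
  rw [← eval_map_ofReal, quadCurve_hessian_det_of_isRoot _ hxℂ, derivative_map, derivative_map,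
    eval_map_ofReal, eval_map_ofReal]
  exact_mod_cast mul_ne_zero (by norm_num) hne

lemma quadCurve_hessian_det_pos (P : ℝ[X]) {x : ℝ} (hx : P.derivative.IsRoot x)
    (hneg : P.eval x * P.derivative.derivative.eval x < 0) :
    0 < D2R (quadCurve P) (x, -P.eval x) (1, 0) (1, 0) *
        D2R (quadCurve P) (x, -P.eval x) (0, 1) (0, 1) -
      D2R (quadCurve P) (x, -P.eval x) (1, 0) (0, 1) ^ 2 := by
  unfold D2R
  rw [quadCurve_hessian_det_of_isRoot P hx]
  linarith

section Chebyshev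

open Real

lemma hasDerivAt_eval_const_mul_cos (q : ℝ[X]) (c θ : ℝ) :
    HasDerivAt (fun θ => q.eval (c * cos θ)) (q.derivative.eval (c * cos θ) * (c * -sin θ)) θ :=
  (q.hasDerivAt _).comp θ ((hasDerivAt_cos θ).const_mul c)

variable {m : ℕ} {c : ℝ} {P : ℝ[X]}

lemma eval_derivative_of_eval_cos (hcheb : ∀ θ : ℝ, P.eval (c * cos θ) = cos (m * θ)) (θ : ℝ) :
    P.derivative.eval (c * cos θ) * (c * sin θ) = m * sin (m * θ) := by
  have hrhs : HasDerivAt (fun θ => P.eval (c * cos θ)) (-sin (m * θ) * (m * 1)) θ := by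
    simpa only [← hcheb] using ((hasDerivAt_id' θ).const_mul (m : ℝ)).cos
  linear_combination -(hasDerivAt_eval_const_mul_cos P c θ).unique hrhs

lemma eval_derivative_derivative_of_eval_cos
    (hcheb : ∀ θ : ℝ, P.eval (c * cos θ) = cos (m * θ)) (θ : ℝ) :
    P.derivative.derivative.eval (c * cos θ) * (c * sin θ) ^ 2 =
      P.derivative.eval (c * cos θ) * (c * cos θ) - m ^ 2 * cos (m * θ) := by
  have hlhs := (hasDerivAt_eval_const_mul_cos P.derivative c θ).mul
    ((hasDerivAt_sin θ).const_mul c)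
  have hrhs : HasDerivAt (fun θ => P.derivative.eval (c * cos θ) * (c * sin θ))
      (m * (cos (m * θ) * (m * 1))) θ := by
    simpa only [← eval_derivative_of_eval_cos hcheb] using
      ((hasDerivAt_id' θ).const_mul (m : ℝ)).sin.const_mul (m : ℝ)
  linear_combination -hlhs.unique hrhs

noncomputable def chebCriticalPoint (c : ℝ) (m k : ℕ) : ℝ := c * cos (k * π / m)

lemma eval_chebCriticalPoint (hcheb : ∀ θ : ℝ, P.eval (c * cos θ) = cos (m * θ)) (hm : m ≠ 0)
    (k : ℕ) : P.eval (chebCriticalPoint c m k) = (-1) ^ k := by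
  rw [chebCriticalPoint, hcheb, mul_div_cancel₀ _ (Nat.cast_ne_zero.2 hm), cos_nat_mul_pi]

lemma sin_nat_mul_pi_div_pos {k : ℕ} (hk : k ∈ Finset.Ioo 0 m) : 0 < sin (k * π / m) := by
  obtain ⟨hk0, hkm⟩ := Finset.mem_Ioo.1 hk
  have hm : (0 : ℝ) < m := by exact_mod_cast hk0.trans hkm
  refine sin_pos_of_pos_of_lt_pi (by positivity) ?_
  rw [div_lt_iff₀ hm, mul_comm]
  exact mul_lt_mul_of_pos_left (by exact_mod_cast hkm) pi_pos

lemma isRoot_derivative_chebCriticalPoint (hcheb : ∀ θ : ℝ, P.eval (c * cos θ) = cos (m * θ))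
    (hc : c ≠ 0) {k : ℕ} (hk : k ∈ Finset.Ioo 0 m) :
    P.derivative.IsRoot (chebCriticalPoint c m k) := by
  have hm : (m : ℝ) ≠ 0 := Nat.cast_ne_zero.2 (by have := Finset.mem_Ioo.1 hk; omega)
  have h := eval_derivative_of_eval_cos hcheb (k * π / m)
  rw [mul_div_cancel₀ _ hm, sin_nat_mul_pi, mul_zero] at h
  exact (mul_eq_zero.1 h).resolve_right (mul_ne_zero hc (sin_nat_mul_pi_div_pos hk).ne')

lemma eval_mul_eval_derivative_derivative_chebCriticalPoint_neg
    (hcheb : ∀ θ : ℝ, P.eval (c * cos θ) = cos (m * θ)) (hc : c ≠ 0) {k : ℕ}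
    (hk : k ∈ Finset.Ioo 0 m) :
    P.eval (chebCriticalPoint c m k) * P.derivative.derivative.eval (chebCriticalPoint c m k)
      < 0 := by
  have hm : m ≠ 0 := by have := Finset.mem_Ioo.1 hk; omega
  have h := eval_derivative_derivative_of_eval_cos hcheb (k * π / m)
  rw [mul_div_cancel₀ _ (Nat.cast_ne_zero.2 hm), cos_nat_mul_pi] at h
  have hroot : P.derivative.eval (chebCriticalPoint c m k) = 0 :=
    isRoot_derivative_chebCriticalPoint hcheb hc hk
  have hsq : ((-1 : ℝ) ^ k) ^ 2 = 1 := by simp [neg_one_pow_eq_or]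
  have hprod : P.eval (chebCriticalPoint c m k) *
      P.derivative.derivative.eval (chebCriticalPoint c m k) * (c * sin (k * π / m)) ^ 2 =
      -(m : ℝ) ^ 2 := by
    rw [eval_chebCriticalPoint hcheb hm]
    unfold chebCriticalPoint at hroot ⊢
    linear_combination (-1) ^ k * h + (-1) ^ k * c * cos (k * π / m) * hroot - m ^ 2 * hsq
  have hpos : 0 < (c * sin (k * π / m)) ^ 2 :=
    sq_pos_of_ne_zero (mul_ne_zero hc (sin_nat_mul_pi_div_pos hk).ne')
  have hm0 : (0 : ℝ) < (m : ℝ) ^ 2 := by positivity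
  exact neg_of_mul_neg_left (hprod ▸ neg_neg_of_pos hm0) hpos.le

lemma injOn_chebCriticalPoint (hc : c ≠ 0) (hm : m ≠ 0) :
    Set.InjOn (chebCriticalPoint c m) (Set.Iic m) := by
  have hm' : (0 : ℝ) < m := by positivity
  have hmem : ∀ k ∈ Set.Iic m, (k : ℝ) * π / m ∈ Set.Icc 0 π := fun k hk =>
    ⟨by positivity, div_le_of_le_mul₀ hm'.le pi_pos.le
      (by rw [mul_comm]; gcongr; exact_mod_cast hk)⟩
  intro j hj k hk h
  have hcos := injOn_cos (hmem j hj) (hmem k hk) (mul_left_cancel₀ hc h)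
  rw [div_left_inj' hm'.ne', mul_left_inj' pi_ne_zero] at hcos
  exact_mod_cast hcos

lemma setOf_isRoot_derivative_map_ofReal (hcheb : ∀ θ : ℝ, P.eval (c * cos θ) = cos (m * θ))
    (hc : c ≠ 0) (hm : m ≠ 0) (hdeg : P.natDegree ≤ m) :
    {x | (P.map (algebraMap ℝ ℂ)).derivative.IsRoot x} =
      (fun k => (chebCriticalPoint c m k : ℂ)) '' ↑(Finset.Ioo 0 m) := by
  have hinj : Set.InjOn (fun k => (chebCriticalPoint c m k : ℂ)) ↑(Finset.Ioo 0 m) :=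
    Complex.ofReal_injective.comp_injOn ((injOn_chebCriticalPoint hc hm).mono
      fun k hk => Set.mem_Iic.2 (Finset.mem_Ioo.1 hk).2.le)
  have hne : P.derivative ≠ 0 := by
    intro h
    have h' := eval_derivative_of_eval_cos hcheb (π / (2 * m))
    have hθ : (m : ℝ) * (π / (2 * m)) = π / 2 := by field_simp
    rw [h, eval_zero, zero_mul, hθ, sin_pi_div_two, mul_one] at h'
    exact hm (by exact_mod_cast h'.symm)
  rw [derivative_map, ← Finset.coe_image]
  refine setOf_isRoot_eq_of_natDegree_le_card (map_ne_zero hne) ?_ ?_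
  · simp only [Finset.mem_image]
    rintro _ ⟨k, hk, rfl⟩
    rw [IsRoot, eval_map_ofReal, isRoot_derivative_chebCriticalPoint hcheb hc hk,
      Complex.ofReal_zero]
  · rw [Finset.card_image_of_injOn hinj, Nat.card_Ioo, natDegree_map]
    exact (natDegree_derivative_le P).trans (by omega)

lemma setOf_isSingularAt_quadCurve_map_ofReal
    (hcheb : ∀ θ : ℝ, P.eval (c * cos θ) = cos (m * θ)) (hc : c ≠ 0) (hm : m ≠ 0)
    (hdeg : P.natDegree ≤ m) :
    {z | IsSingularAt (quadCurve (P.map (algebraMap ℝ ℂ))) z} =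
      (fun k => ((chebCriticalPoint c m k : ℂ), -((P.eval (chebCriticalPoint c m k) : ℝ) : ℂ))) ''
        ↑(Finset.Ioo 0 m) := by
  have hroots := setOf_isRoot_derivative_map_ofReal hcheb hc hm hdeg
  have hcrit : ∀ x, (P.map (algebraMap ℝ ℂ)).derivative.IsRoot x →
      (P.map (algebraMap ℝ ℂ)).eval x ^ 2 = 1 := by
    rintro x hx
    obtain ⟨k, -, rfl⟩ := (Set.ext_iff.1 hroots x).1 hx
    rw [eval_map_ofReal, eval_chebCriticalPoint hcheb hm]
    simp [neg_one_pow_eq_or]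
  rw [setOf_isSingularAt_quadCurve _ hcrit, hroots, Set.image_image]
  simp only [eval_map_ofReal]

end Chebyshev

/-- for the normalized Chebyshev polynomial P of degree m, the curve
{y² + 2yP(x) + 1 = 0} has exactly m − 1 singular points in ℂ², all of which are nodes
with real coordinates, solitary over ℝ (positive-definite real Hessian determinant). -/
theorem chebyshev_deformation_pattern_solitary_nodes
    (m : ℕ) (hm : 2 ≤ m) (P : Polynomial ℝ) (hdeg : P.natDegree = m)
    (hcheb : ∀ θ : ℝ,
      P.eval ((2 : ℝ) ^ (((m : ℝ) - 1) / (m : ℝ)) * Real.cos θ) = Real.cos (m * θ))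
    (Fc : ℂ × ℂ → ℂ)
    (hFc : ∀ z : ℂ × ℂ, Fc z = z.2 ^ 2 + 2 * z.2 * (Polynomial.aeval z.1) P + 1)
    (Fr : ℝ × ℝ → ℝ)
    (hFr : ∀ w : ℝ × ℝ, Fr w = w.2 ^ 2 + 2 * w.2 * P.eval w.1 + 1) :
    Set.ncard {z : ℂ × ℂ | IsSingularAt Fc z} = m - 1 ∧
    ∀ z : ℂ × ℂ, IsSingularAt Fc z → IsNode Fc z ∧
      ∃ w : ℝ × ℝ, z = ((w.1 : ℂ), (w.2 : ℂ)) ∧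
        0 < D2R Fr w (1, 0) (1, 0) * D2R Fr w (0, 1) (0, 1) - D2R Fr w (1, 0) (0, 1) ^ 2 := by
  set c : ℝ := 2 ^ (((m : ℝ) - 1) / m)
  have hc : c ≠ 0 := by positivity
  have hm0 : m ≠ 0 := by omega
  obtain rfl : Fc = quadCurve (P.map (algebraMap ℝ ℂ)) :=
    funext fun z => by rw [hFc, quadCurve, eval_map_algebraMap]
  obtain rfl : Fr = quadCurve P := funext hFr
  have hinj : Set.InjOn (chebCriticalPoint c m) ↑(Finset.Ioo 0 m) :=
    (injOn_chebCriticalPoint hc hm0).mono fun k hk => Set.mem_Iic.2 (Finset.mem_Ioo.1 hk).2.le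
  have hsing := setOf_isSingularAt_quadCurve_map_ofReal hcheb hc hm0 hdeg.le
  refine ⟨?_, ?_⟩
  · rw [hsing, Set.InjOn.ncard_image fun j hj k hk h =>
      hinj hj hk (Complex.ofReal_injective (congrArg Prod.fst h))]
    simp
  · intro z hz
    obtain ⟨k, hk, rfl⟩ := (Set.ext_iff.1 hsing z).1 hz
    have hroot := isRoot_derivative_chebCriticalPoint hcheb hc hk
    have hneg := eval_mul_eval_derivative_derivative_chebCriticalPoint_neg hcheb hc hk
    exact ⟨isNode_quadCurve_map_ofReal P hz hroot hneg.ne,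
      (chebCriticalPoint c m k, -P.eval (chebCriticalPoint c m k)), by simp,
      quadCurve_hessian_det_pos P hroot hneg⟩
end
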